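/- (a) σ_α is a Lie algebra 2-cocycle on F(∂) regarded as a Lie algebra over C; (b) the cohomology class [σ_α] ∈ H²_Lie(F(∂)) does not depend on the choice of the lift α. -/

import Mathlib

open Finset

/-- A derivation on a field `F`. -/
structure IsDerivation {F : Type*} [Field F] (d : F → F) : Prop where
  map_add : ∀ a b : F, d (a + b) = d a + d b
  leibniz : ∀ a b : F, d (a * b) = d a * b + a * d b

namespace IsDerivation

variable {F : Type*} [Field F] {d : F → F}

theorem map_zero' (hd : IsDerivation d) : d 0 = 0 := by
  have h := hd.map_add 0 0
  simp only [add_zero] at h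
  exact (left_eq_add.mp h)

theorem map_one' (hd : IsDerivation d) : d 1 = 0 := by
  have h := hd.leibniz 1 1
  simp only [mul_one, one_mul] at h
  exact (left_eq_add.mp h)

theorem map_neg' (hd : IsDerivation d) (a : F) : d (-a) = - d a := by
  have h := hd.map_add a (-a)
  simp only [add_neg_cancel, hd.map_zero'] at h
  exact (neg_eq_of_add_eq_zero_right h.symm).symm

end IsDerivation

/-- The subfield of constants of a derivation. -/
def constants (F : Type*) [Field F] (d : F → F) (hd : IsDerivation d) : Subfield F where
  carrier := {a : F | d a = 0}
  zero_mem' := hd.map_zero'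
  one_mem' := hd.map_one'
  add_mem' := by
    intro a b ha hb
    simp only [Set.mem_setOf_eq] at *
    rw [hd.map_add, ha, hb, add_zero]
  neg_mem' := by
    intro a ha
    simp only [Set.mem_setOf_eq] at *
    rw [hd.map_neg', ha, neg_zero]
  mul_mem' := by
    intro a b ha hb
    simp only [Set.mem_setOf_eq] at *
    rw [hd.leibniz, ha, hb, zero_mul, mul_zero, add_zero]
  inv_mem' := by
    intro a ha
    simp only [Set.mem_setOf_eq] at *
    by_cases h0 : a = 0
    · rw [h0, inv_zero]; exact hd.map_zero'
    · have h := hd.leibniz a a⁻¹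
      rw [mul_inv_cancel₀ h0, hd.map_one', ha, zero_mul, zero_add] at h
      have h2 : a * d a⁻¹ = 0 := h.symm
      rcases mul_eq_zero.mp h2 with h3 | h3
      · exact absurd h3 h0
      · exact h3
/-- `A` is the ring of differential operators `F⟨∂⟩` over the differential field `(F, d)`:
it contains `F` via `ι`, an element `δ` (the symbol `∂`) satisfying `∂a = a∂ + a'`, and every
element has a unique expression `Σ ι(aᵢ) ∂^i`. -/
structure IsDiffOpRing {F : Type*} [Field F] (d : F → F) (A : Type*) [Ring A]
    (ι : F →+* A) (δ : A) : Prop where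
  comm : ∀ a : F, δ * ι a = ι a * δ + ι (d a)
  repr : ∀ P : A, ∃! c : ℕ →₀ F, P = c.sum fun i x => ι x * δ ^ i

/-- The action of the differential operator with coefficients `a 0, …, a n`
(i.e. `Σ_{i ≤ n} aᵢ ∂^i`) on an element `y` of `F`. -/
def diffOpAct {F : Type*} [Field F] (d : F → F) (n : ℕ) (a : ℕ → F) (y : F) : F :=
  ∑ i ∈ Finset.range (n + 1), a i * d^[i] y

/-- A differential field is linearly differentially closed if every differential operator of
positive degree has a nonzero zero. -/
def LinDiffClosed {F : Type*} [Field F] (d : F → F) : Prop :=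
  ∀ (n : ℕ) (a : ℕ → F), 0 < n → a n ≠ 0 → ∃ y : F, y ≠ 0 ∧ diffOpAct d n a y = 0

/-- `P ∈ F⟨∂⟩` has degree `n`, i.e. `P = Σ_{i ≤ n} ι(aᵢ) δ^i` with `aₙ ≠ 0`. -/
def HasDeg {F : Type*} [Field F] {A : Type*} [Ring A] (ι : F →+* A) (δ : A)
    (P : A) (n : ℕ) : Prop :=
  ∃ a : ℕ → F, a n ≠ 0 ∧ P = ∑ i ∈ Finset.range (n + 1), ι (a i) * δ ^ i

/-- `K` is the division ring of quotients of the (Ore) domain `A`: `A` embeds in `K` via `j`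
and every element of `K` has the form `P⁻¹ Q` with `P, Q ∈ A`, `P ≠ 0`. -/
structure IsQuotientDivisionRing (A : Type*) [Ring A] (K : Type*) [DivisionRing K]
    (j : A →+* K) : Prop where
  inj : Function.Injective j
  quot : ∀ f : K, ∃ P Q : A, P ≠ 0 ∧ f = (j P)⁻¹ * j Q

/-- `f = P⁻¹ Q` is a minimal presentation of `f ∈ F(∂)`: a presentation where `P` has the
smallest possible degree. -/
def IsMinPres {F : Type*} [Field F] {A : Type*} [Ring A] (ι : F →+* A) (δ : A)
    {K : Type*} [DivisionRing K] (j : A →+* K) (f : K) (P Q : A) : Prop :=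
  P ≠ 0 ∧ f = (j P)⁻¹ * j Q ∧
    ∀ (P' Q' : A) (n n' : ℕ), P' ≠ 0 → f = (j P')⁻¹ * j Q' →
      HasDeg ι δ P n → HasDeg ι δ P' n' → n ≤ n'

/-- The two-sided ideal `I(V)` of finite-rank endomorphisms of a `C`-vector space `V`. -/
def finRankIdeal (C : Type*) [Field C] (V : Type*) [AddCommGroup V] [Module C V] :
    TwoSidedIdeal (Module.End C V) :=
  TwoSidedIdeal.mk' {L : Module.End C V | FiniteDimensional C (LinearMap.range L)}
    (by
      show FiniteDimensional C (LinearMap.range (0 : Module.End C V))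
      rw [LinearMap.range_zero]
      infer_instance)
    (by
      intro f g hf hg
      simp only [Set.mem_setOf_eq] at *
      have hle : LinearMap.range (f + g) ≤ LinearMap.range f ⊔ LinearMap.range g := by
        rintro y ⟨x, rfl⟩
        exact Submodule.mem_sup.2 ⟨f x, ⟨x, rfl⟩, g x, ⟨x, rfl⟩, rfl⟩
      haveI := hf; haveI := hg
      haveI := Submodule.finiteDimensional_sup (LinearMap.range f) (LinearMap.range g)
      exact Submodule.finiteDimensional_of_le hle)
    (by
      intro f hf
      simp only [Set.mem_setOf_eq] at *
      rw [LinearMap.range_neg]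
      exact hf)
    (by
      intro f g hg
      simp only [Set.mem_setOf_eq] at *
      haveI := hg
      have : LinearMap.range (f * g) = Submodule.map f (LinearMap.range g) :=
        LinearMap.range_comp g f
      rw [this]
      exact Module.Finite.map _ f)
    (by
      intro f g hf
      simp only [Set.mem_setOf_eq] at *
      haveI := hf
      have hle : LinearMap.range (f * g) ≤ LinearMap.range f := by
        rintro y ⟨x, rfl⟩; exact ⟨g x, rfl⟩
      exact Submodule.finiteDimensional_of_le hle)

/-- The Calkin algebra `M_C(V) = End_C(V) / I(V)`. -/
abbrev CalkinAlgebra (C : Type*) [Field C] (V : Type*) [AddCommGroup V] [Module C V] :=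
  (finRankIdeal C V).ringCon.Quotient


/-- The trace of a finite-rank endomorphism `L`, computed as the trace of the restriction of
`L` to its (finite-dimensional) range. -/
noncomputable def ftrace (C : Type*) [Field C] (V : Type*) [AddCommGroup V] [Module C V]
    (L : Module.End C V) : C :=
  LinearMap.trace C (LinearMap.range L)
    (L.restrict (p := LinearMap.range L) (q := LinearMap.range L)
      (fun x _ => LinearMap.mem_range_self L x))

/-- The Calkin 2-cocycle `σ_α(P,Q) = tr(α([P,Q]) - [α(P), α(Q)])` attached to a lift `α` of the
embedding of `F(∂)` into the Calkin algebra. -/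
noncomputable def calkinCocycle {C : Type*} [Field C] {V : Type*} [AddCommGroup V]
    [Module C V] {K : Type*} [DivisionRing K] (α : K → Module.End C V) (P Q : K) : C :=
  ftrace C V (α (P * Q - Q * P) - (α P * α Q - α Q * α P))

/-! For an additive lift `β`, write `D_β(x, y) = β⁅x, y⁆ - ⁅β x, β y⁆`. It has finite rank
because `β` is multiplicative modulo finite-rank operators, and `σ_β = tr ∘ D_β`. The trace of
finite-rank operators is additive, `C`-linear, and kills every commutator `⁅L, M⁆` with `L` of
finite rank. The Jacobi identities in `F(∂)` and in `End(F)` turn the cyclic sum of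
`D_β(⁅x, y⁆, z)` into minus the cyclic sum of `⁅D_β(x, y), β z⁆`, whose trace vanishes. For a
second lift `β'`, the operators `β x - β' x` have finite rank, so `⁅β x, β y⁆ - ⁅β' x, β' y⁆` is a
sum of such commutators and `σ_β - σ_β'` is the coboundary of `tr ∘ (β - β')`. Linearity over `C`
holds because the constants are central in `F⟨∂⟩`, hence in `F(∂)`. -/

section FiniteRankTrace

attribute [local instance] LieRing.ofAssociativeRing

variable {C : Type*} [Field C] {V : Type*} [AddCommGroup V] [Module C V]

theorem mem_finRankIdeal_iff {L : Module.End C V} :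
    L ∈ finRankIdeal C V ↔ FiniteDimensional C (LinearMap.range L) :=
  TwoSidedIdeal.mem_mk' _ _ _ _ _ _ _

theorem ftrace_subtype_comp (W : Submodule C V) [FiniteDimensional C W] (f : V →ₗ[C] W) :
    ftrace C V (W.subtype ∘ₗ f) = LinearMap.trace C W (f ∘ₗ W.subtype) := by
  set L : Module.End C V := W.subtype ∘ₗ f
  have hRW : LinearMap.range L ≤ W := by rintro _ ⟨x, rfl⟩; exact (f x).2
  have : FiniteDimensional C (LinearMap.range L) := Submodule.finiteDimensional_of_le hRW
  let p : W →ₗ[C] LinearMap.range L :=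
    LinearMap.codRestrict _ (L ∘ₗ W.subtype) fun w => LinearMap.mem_range_self _ _
  have hf : f ∘ₗ W.subtype = Submodule.inclusion hRW ∘ₗ p := rfl
  rw [hf, LinearMap.trace_comp_comm']
  rfl

theorem ftrace_eq_trace_codRestrict (W : Submodule C V) [FiniteDimensional C W]
    (L : Module.End C V) (h : ∀ x, L x ∈ W) :
    ftrace C V L = LinearMap.trace C W (LinearMap.codRestrict W L h ∘ₗ W.subtype) :=
  ftrace_subtype_comp W (LinearMap.codRestrict W L h)

variable {L M : Module.End C V}

theorem ftrace_add (hL : L ∈ finRankIdeal C V) (hM : M ∈ finRankIdeal C V) :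
    ftrace C V (L + M) = ftrace C V L + ftrace C V M := by
  rw [mem_finRankIdeal_iff] at hL hM
  let W := LinearMap.range L ⊔ LinearMap.range M
  have hLW : ∀ x, L x ∈ W := fun x => Submodule.mem_sup_left (LinearMap.mem_range_self L x)
  have hMW : ∀ x, M x ∈ W := fun x => Submodule.mem_sup_right (LinearMap.mem_range_self M x)
  rw [ftrace_eq_trace_codRestrict W L hLW, ftrace_eq_trace_codRestrict W M hMW,
    ftrace_eq_trace_codRestrict W (L + M) fun x => W.add_mem (hLW x) (hMW x), ← map_add]
  rfl

theorem ftrace_smul (c : C) (hL : L ∈ finRankIdeal C V) :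
    ftrace C V (c • L) = c * ftrace C V L := by
  rw [mem_finRankIdeal_iff] at hL
  let W := LinearMap.range L
  have hLW : ∀ x, L x ∈ W := LinearMap.mem_range_self L
  rw [ftrace_eq_trace_codRestrict W L hLW,
    ftrace_eq_trace_codRestrict W (c • L) fun x => W.smul_mem c (hLW x), ← smul_eq_mul,
    ← map_smul]
  rfl

theorem ftrace_zero : ftrace C V 0 = 0 := by
  simpa using ftrace_smul (0 : C) (finRankIdeal C V).zero_mem

theorem ftrace_neg (hL : L ∈ finRankIdeal C V) : ftrace C V (-L) = -ftrace C V L := by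
  simpa using ftrace_smul (-1 : C) hL

theorem ftrace_sub (hL : L ∈ finRankIdeal C V) (hM : M ∈ finRankIdeal C V) :
    ftrace C V (L - M) = ftrace C V L - ftrace C V M := by
  rw [sub_eq_add_neg, ftrace_add hL ((finRankIdeal C V).neg_mem hM), ftrace_neg hM,
    sub_eq_add_neg]

theorem ftrace_mul_comm (hL : L ∈ finRankIdeal C V) :
    ftrace C V (L * M) = ftrace C V (M * L) := by
  rw [mem_finRankIdeal_iff] at hL
  let W := LinearMap.range L
  let g : W →ₗ[C] V := M ∘ₗ W.subtype
  have hLM : L * M = W.subtype ∘ₗ (L.rangeRestrict ∘ₗ M) := rfl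
  have hML : M * L = (LinearMap.range g).subtype ∘ₗ (g.rangeRestrict ∘ₗ L.rangeRestrict) := rfl
  rw [hLM, hML, ftrace_subtype_comp, ftrace_subtype_comp,
    LinearMap.comp_assoc (LinearMap.range g).subtype, ← LinearMap.trace_comp_comm' g.rangeRestrict]
  rfl

theorem ftrace_lie (hL : L ∈ finRankIdeal C V) (M : Module.End C V) :
    ftrace C V ⁅L, M⁆ = 0 := by
  rw [Ring.lie_def, ftrace_sub ((finRankIdeal C V).mul_mem_right _ _ hL)
    ((finRankIdeal C V).mul_mem_left _ _ hL), ftrace_mul_comm hL, sub_self]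

end FiniteRankTrace

section LieDefect

variable {L L' : Type*} [LieRing L] [LieRing L']

theorem lie_lie_add_lie_lie_add_lie_lie (x y z : L) :
    ⁅⁅x, y⁆, z⁆ + ⁅⁅y, z⁆, x⁆ + ⁅⁅z, x⁆, y⁆ = 0 := by
  rw [← lie_skew ⁅x, y⁆ z, ← lie_skew ⁅y, z⁆ x, ← lie_skew ⁅z, x⁆ y, ← neg_eq_zero,
    ← lie_jacobi x y z]
  abel

def lieDefect (β : L →+ L') (x y : L) : L' :=
  β ⁅x, y⁆ - ⁅β x, β y⁆

variable (β : L →+ L')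

theorem lieDefect_self (x : L) : lieDefect β x x = 0 := by
  rw [lieDefect, lie_self, lie_self, map_zero, sub_zero]

theorem lieDefect_add_left (x y z : L) :
    lieDefect β (x + y) z = lieDefect β x z + lieDefect β y z := by
  simp only [lieDefect, add_lie, map_add]
  abel

theorem lieDefect_skew (x y : L) : lieDefect β x y = -lieDefect β y x := by
  rw [lieDefect, lieDefect, ← lie_skew y x, ← lie_skew (β y) (β x), map_neg]
  abel

theorem lieDefect_lie_cyclic (x y z : L) :
    lieDefect β ⁅x, y⁆ z + lieDefect β ⁅y, z⁆ x + lieDefect β ⁅z, x⁆ y =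
      -(⁅lieDefect β x y, β z⁆ + ⁅lieDefect β y z, β x⁆ + ⁅lieDefect β z x, β y⁆) := by
  have hexpand : ∀ a b c : L, lieDefect β ⁅a, b⁆ c =
      β ⁅⁅a, b⁆, c⁆ - ⁅⁅β a, β b⁆, β c⁆ - ⁅lieDefect β a b, β c⁆ := fun a b c => by
    rw [lieDefect, lieDefect, sub_sub, ← add_lie, add_sub_cancel]
  have hcyc : β ⁅⁅x, y⁆, z⁆ + β ⁅⁅y, z⁆, x⁆ + β ⁅⁅z, x⁆, y⁆ = 0 := by
    rw [← map_add, ← map_add, lie_lie_add_lie_lie_add_lie_lie, map_zero]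
  rw [hexpand, hexpand, hexpand]
  calc _ = (β ⁅⁅x, y⁆, z⁆ + β ⁅⁅y, z⁆, x⁆ + β ⁅⁅z, x⁆, y⁆)
        - (⁅⁅β x, β y⁆, β z⁆ + ⁅⁅β y, β z⁆, β x⁆ + ⁅⁅β z, β x⁆, β y⁆)
        - (⁅lieDefect β x y, β z⁆ + ⁅lieDefect β y z, β x⁆ + ⁅lieDefect β z x, β y⁆) := by abel
    _ = _ := by rw [hcyc, lie_lie_add_lie_lie_add_lie_lie, sub_zero, zero_sub]

theorem lieDefect_sub_lieDefect (β' : L →+ L') (x y : L) :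
    lieDefect β x y - lieDefect β' x y =
      (β ⁅x, y⁆ - β' ⁅x, y⁆) - (⁅β x - β' x, β y⁆ - ⁅β y - β' y, β' x⁆) := by
  simp only [lieDefect, sub_lie, ← lie_skew (β' x)]
  abel

end LieDefect

section LiftModuloIdeal

attribute [local instance] LieRing.ofAssociativeRing

variable {R : Type*} [Ring R] {I : TwoSidedIdeal R} {K : Type*} [Ring K]

theorem TwoSidedIdeal.lie_mem_of_left_mem {a : R} (ha : a ∈ I) (b : R) : ⁅a, b⁆ ∈ I := by
  rw [Ring.lie_def]
  exact I.sub_mem (I.mul_mem_right _ _ ha) (I.mul_mem_left _ _ ha)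

theorem TwoSidedIdeal.sub_mem_of_mk'_eq {a b : R} (h : I.ringCon.mk' a = I.ringCon.mk' b) :
    a - b ∈ I :=
  (I.rel_iff a b).1 (I.ringCon.eq.1 h)

theorem mul_sub_mul_mem_of_mk'_eq (Θ : K →+* I.ringCon.Quotient) {β : K → R}
    (hβ : ∀ x, I.ringCon.mk' (β x) = Θ x) (x y : K) : β (x * y) - β x * β y ∈ I :=
  TwoSidedIdeal.sub_mem_of_mk'_eq (by rw [hβ, map_mul, map_mul, hβ, hβ])

theorem lieDefect_mem (β : K →+ R) (hβ : ∀ x y, β (x * y) - β x * β y ∈ I) (x y : K) :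
    lieDefect β x y ∈ I := by
  have h : lieDefect β x y = (β (x * y) - β x * β y) - (β (y * x) - β y * β x) := by
    rw [lieDefect, Ring.lie_def, Ring.lie_def, map_sub]
    abel
  rw [h]
  exact I.sub_mem (hβ x y) (hβ y x)

end LiftModuloIdeal

section CalkinCocycle

attribute [local instance] LieRing.ofAssociativeRing

variable {C : Type*} [Field C] {V : Type*} [AddCommGroup V] [Module C V]
  {K : Type*} [DivisionRing K]

theorem calkinCocycle_eq_ftrace_lieDefect (β : K →+ Module.End C V) (x y : K) :
    calkinCocycle β x y = ftrace C V (lieDefect β x y) := by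
  simp only [calkinCocycle, lieDefect, Ring.lie_def]

theorem calkinCocycle_self (β : K →+ Module.End C V) (x : K) : calkinCocycle β x x = 0 := by
  rw [calkinCocycle_eq_ftrace_lieDefect, lieDefect_self, ftrace_zero]

variable {β : K →+ Module.End C V} (hβ : ∀ x y, β (x * y) - β x * β y ∈ finRankIdeal C V)
include hβ

theorem calkinCocycle_add_left (x y z : K) :
    calkinCocycle β (x + y) z = calkinCocycle β x z + calkinCocycle β y z := by
  simp only [calkinCocycle_eq_ftrace_lieDefect]
  rw [lieDefect_add_left, ftrace_add (lieDefect_mem β hβ x z) (lieDefect_mem β hβ y z)]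

theorem calkinCocycle_smul_left {s : K} (c : C) (hs : ∀ y, Commute s y)
    (hβs : ∀ x, β (s * x) = c • β x) (x y : K) :
    calkinCocycle β (s * x) y = c * calkinCocycle β x y := by
  have hsxy : ⁅s * x, y⁆ = s * ⁅x, y⁆ := by
    rw [Ring.lie_def, Ring.lie_def, mul_sub, ← mul_assoc, ← mul_assoc, ← (hs y).eq, mul_assoc s y x]
  simp only [calkinCocycle_eq_ftrace_lieDefect]
  rw [← ftrace_smul c (lieDefect_mem β hβ x y), lieDefect, hsxy, hβs, hβs, smul_lie, ← smul_sub,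
    lieDefect]

theorem calkinCocycle_antisymm (x y : K) : calkinCocycle β x y = -calkinCocycle β y x := by
  simp only [calkinCocycle_eq_ftrace_lieDefect]
  rw [lieDefect_skew, ftrace_neg (lieDefect_mem β hβ y x)]

theorem calkinCocycle_lie_cyclic (x y z : K) :
    calkinCocycle β ⁅x, y⁆ z + calkinCocycle β ⁅y, z⁆ x + calkinCocycle β ⁅z, x⁆ y = 0 := by
  have hD := lieDefect_mem β hβ
  have hC : ∀ a b c, ⁅lieDefect β a b, β c⁆ ∈ finRankIdeal C V := fun a b c =>
    TwoSidedIdeal.lie_mem_of_left_mem (hD a b) (β c)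
  simp only [calkinCocycle_eq_ftrace_lieDefect]
  rw [← ftrace_add (hD _ _) (hD _ _), ← ftrace_add ((finRankIdeal C V).add_mem (hD _ _) (hD _ _))
    (hD _ _), lieDefect_lie_cyclic, ftrace_neg ((finRankIdeal C V).add_mem
    ((finRankIdeal C V).add_mem (hC _ _ _) (hC _ _ _)) (hC _ _ _)),
    ftrace_add ((finRankIdeal C V).add_mem (hC _ _ _) (hC _ _ _)) (hC _ _ _),
    ftrace_add (hC _ _ _) (hC _ _ _), ftrace_lie (hD _ _), ftrace_lie (hD _ _),
    ftrace_lie (hD _ _)]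
  simp

theorem calkinCocycle_sub_calkinCocycle {β' : K →+ Module.End C V}
    (hβ' : ∀ x y, β' (x * y) - β' x * β' y ∈ finRankIdeal C V)
    (hββ' : ∀ x, β x - β' x ∈ finRankIdeal C V) (x y : K) :
    calkinCocycle β x y - calkinCocycle β' x y = ftrace C V (β ⁅x, y⁆ - β' ⁅x, y⁆) := by
  have hC₁ := TwoSidedIdeal.lie_mem_of_left_mem (hββ' x) (β y)
  have hC₂ := TwoSidedIdeal.lie_mem_of_left_mem (hββ' y) (β' x)
  simp only [calkinCocycle_eq_ftrace_lieDefect]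
  rw [← ftrace_sub (lieDefect_mem β hβ x y) (lieDefect_mem β' hβ' x y), lieDefect_sub_lieDefect,
    ftrace_sub (hββ' _) ((finRankIdeal C V).sub_mem hC₁ hC₂), ftrace_sub hC₁ hC₂,
    ftrace_lie (hββ' x), ftrace_lie (hββ' y), sub_zero, sub_zero]

end CalkinCocycle

section DifferentialOperators

theorem IsDiffOpRing.commute_of_d_eq_zero {F : Type*} [Field F] {d : F → F} {A : Type*} [Ring A]
    {ι : F →+* A} {δ : A} (hA : IsDiffOpRing d A ι δ) {c : F} (hc : d c = 0) (P : A) :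
    Commute (ι c) P := by
  have hδ : Commute (ι c) δ := by
    have h := hA.comm c
    rw [hc, map_zero, add_zero] at h
    exact h.symm
  obtain ⟨co, rfl, -⟩ := hA.repr P
  exact Commute.sum_right _ _ _ fun i _ => ((Commute.all c (co i)).map ι).mul_right (hδ.pow_right i)

theorem IsQuotientDivisionRing.commute_of_forall_commute {A : Type*} [Ring A] {K : Type*}
    [DivisionRing K] {j : A →+* K} (hK : IsQuotientDivisionRing A K j) {a : K}
    (ha : ∀ P, Commute a (j P)) (f : K) : Commute a f := by
  obtain ⟨P, Q, -, rfl⟩ := hK.quot f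
  exact (ha P).inv_right₀.mul_right (ha Q)

end DifferentialOperators

theorem calkinCocycle_isCocycle_and_class_independent_of_lift_general {F : Type*} [Field F]
    (d : F → F) (hd : IsDerivation d)
    {A : Type*} [Ring A] (ι : F →+* A) (δ : A) (hA : IsDiffOpRing d A ι δ)
    {K : Type*} [DivisionRing K] (j : A →+* K) (hK : IsQuotientDivisionRing A K j)
    (Θ : K →+* CalkinAlgebra (constants F d hd) F)
    (α α' : K → Module.End (constants F d hd) F)
    (hαadd : ∀ x y : K, α (x + y) = α x + α y)
    (hαsmul : ∀ (c : constants F d hd) (x : K), α (j (ι (c : F)) * x) = c • α x)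
    (hαlift : ∀ x : K, (finRankIdeal (constants F d hd) F).ringCon.mk' (α x) = Θ x)
    (hα'add : ∀ x y : K, α' (x + y) = α' x + α' y)
    (hα'smul : ∀ (c : constants F d hd) (x : K), α' (j (ι (c : F)) * x) = c • α' x)
    (hα'lift : ∀ x : K, (finRankIdeal (constants F d hd) F).ringCon.mk' (α' x) = Θ x) :
    -- (a) `σ_α` is a Lie algebra 2-cocycle over `C`:
    ((∀ x y z : K, calkinCocycle α (x + y) z = calkinCocycle α x z + calkinCocycle α y z) ∧
     (∀ (c : constants F d hd) (x y : K),
        calkinCocycle α (j (ι (c : F)) * x) y = c * calkinCocycle α x y) ∧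
     (∀ x : K, calkinCocycle α x x = 0) ∧
     (∀ x y : K, calkinCocycle α x y = - calkinCocycle α y x) ∧
     (∀ x y z : K,
        calkinCocycle α (x * y - y * x) z + calkinCocycle α (y * z - z * y) x
          + calkinCocycle α (z * x - x * z) y = 0)) ∧
    -- (b) the class of `σ_α` does not depend on `α`: the difference of the cocycles of two
    -- lifts is a coboundary.
    (∃ μ : K → constants F d hd,
      (∀ x y : K, μ (x + y) = μ x + μ y) ∧
      (∀ (c : constants F d hd) (x : K), μ (j (ι (c : F)) * x) = c * μ x) ∧
      (∀ x y : K,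
        calkinCocycle α x y - calkinCocycle α' x y = μ (x * y - y * x))) := by
  let β : K →+ Module.End (constants F d hd) F := AddMonoidHom.mk' α hαadd
  let β' : K →+ Module.End (constants F d hd) F := AddMonoidHom.mk' α' hα'add
  have hβ := mul_sub_mul_mem_of_mk'_eq Θ hαlift
  have hβ' := mul_sub_mul_mem_of_mk'_eq Θ hα'lift
  have hββ' : ∀ x, α x - α' x ∈ finRankIdeal (constants F d hd) F := fun x =>
    TwoSidedIdeal.sub_mem_of_mk'_eq (by rw [hαlift, hα'lift])
  have hcentral : ∀ (c : constants F d hd) (y : K), Commute (j (ι c)) y := fun c =>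
    hK.commute_of_forall_commute fun P => (hA.commute_of_d_eq_zero c.2 P).map j
  refine ⟨⟨calkinCocycle_add_left (β := β) hβ,
    fun c => calkinCocycle_smul_left (β := β) hβ c (hcentral c) (hαsmul c),
    calkinCocycle_self β, calkinCocycle_antisymm (β := β) hβ,
    calkinCocycle_lie_cyclic (β := β) hβ⟩,
    fun x => ftrace _ F (α x - α' x), fun x y => ?_, fun c x => ?_,
    calkinCocycle_sub_calkinCocycle (β := β) (β' := β') hβ hβ' hββ'⟩
  · dsimp only
    rw [hαadd, hα'add, add_sub_add_comm, ftrace_add (hββ' x) (hββ' y)]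
  · dsimp only
    rw [hαsmul, hα'smul, ← ftrace_smul c (hββ' x), smul_sub]

/-- (a) `σ_α` is a Lie algebra 2-cocycle on `F(∂)`, regarded as a Lie algebra
over `C`; (b) its cohomology class in `H²_Lie(F(∂))` does not depend on the choice of linear
lift `α` of `θ : F(∂) → M_C(F)`: the difference of the cocycles attached to two lifts is the
coboundary of a `C`-linear functional `μ`. -/
theorem calkinCocycle_isCocycle_and_class_independent_of_lift {F : Type*} [Field F]
    [CharZero F] (d : F → F) (hd : IsDerivation d)
    (halg : IsAlgClosed (constants F d hd))
    (hne : constants F d hd ≠ ⊤)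
    (hldc : LinDiffClosed d)
    {A : Type*} [Ring A] (ι : F →+* A) (δ : A) (hA : IsDiffOpRing d A ι δ)
    {K : Type*} [DivisionRing K] (j : A →+* K) (hK : IsQuotientDivisionRing A K j)
    (ρ : A →+* Module.End (constants F d hd) F)
    (hρ1 : ∀ a y : F, ρ (ι a) y = a * y)
    (hρ2 : ∀ y : F, ρ δ y = d y)
    (Θ : K →+* CalkinAlgebra (constants F d hd) F)
    (hΘinj : Function.Injective Θ)
    (hΘ : ∀ P : A, Θ (j P) = (finRankIdeal (constants F d hd) F).ringCon.mk' (ρ P))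
    (α α' : K → Module.End (constants F d hd) F)
    (hαadd : ∀ x y : K, α (x + y) = α x + α y)
    (hαsmul : ∀ (c : constants F d hd) (x : K), α (j (ι (c : F)) * x) = c • α x)
    (hαlift : ∀ x : K, (finRankIdeal (constants F d hd) F).ringCon.mk' (α x) = Θ x)
    (hα'add : ∀ x y : K, α' (x + y) = α' x + α' y)
    (hα'smul : ∀ (c : constants F d hd) (x : K), α' (j (ι (c : F)) * x) = c • α' x)
    (hα'lift : ∀ x : K, (finRankIdeal (constants F d hd) F).ringCon.mk' (α' x) = Θ x) :
    -- (a) `σ_α` is a Lie algebra 2-cocycle over `C`: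
    ((∀ x y z : K, calkinCocycle α (x + y) z = calkinCocycle α x z + calkinCocycle α y z) ∧
     (∀ (c : constants F d hd) (x y : K),
        calkinCocycle α (j (ι (c : F)) * x) y = c * calkinCocycle α x y) ∧
     (∀ x : K, calkinCocycle α x x = 0) ∧
     (∀ x y : K, calkinCocycle α x y = - calkinCocycle α y x) ∧
     (∀ x y z : K,
        calkinCocycle α (x * y - y * x) z + calkinCocycle α (y * z - z * y) x
          + calkinCocycle α (z * x - x * z) y = 0)) ∧
    -- (b) the class of `σ_α` does not depend on `α`: the difference of the cocycles of two
    -- lifts is a coboundary.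
    (∃ μ : K → constants F d hd,
      (∀ x y : K, μ (x + y) = μ x + μ y) ∧
      (∀ (c : constants F d hd) (x : K), μ (j (ι (c : F)) * x) = c * μ x) ∧
      (∀ x y : K,
        calkinCocycle α x y - calkinCocycle α' x y = μ (x * y - y * x))) :=
  calkinCocycle_isCocycle_and_class_independent_of_lift_general d hd ι δ hA j hK Θ α α' hαadd hαsmul
    hαlift hα'add hα'smul hα'lift
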